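/- Let f ∈ L¹(ℝ) be continuous with L ≥ 1 vanishing moments (∫ tᵏ f(t) dt = 0 for k = 0,…,L−1, absolutely convergent) and with ∫ |t|^L |f(t)| dt < ∞. Then the antiderivative h(x) = ∫_{-∞}^x f(t) dt satisfies ∫ |x|ᵏ |h(x)| dx ≤ (2/(k+1)) ∫ |t|^{k+1} |f(t)| dt for k = 0,…,L−1, and has L−1 vanishing moments: ∫ xᵏ h(x) dx = 0 for k = 0,…,L−2. -/
import Mathlib

open MeasureTheory ENNReal

section Stmt10Aux
open Set Filter Topology

theorem stmt10_poshalf (f : ℝ → ℂ) (hf_cont : Continuous f) (k : ℕ) :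
    ∫⁻ x in Ioi (0:ℝ), ENNReal.ofReal (x ^ k) * ∫⁻ t in Ioi x, ENNReal.ofReal ‖f t‖
      ≤ ENNReal.ofReal (1 / ((k:ℝ)+1)) * ∫⁻ t, ENNReal.ofReal (|t| ^ (k+1) * ‖f t‖) := by
  set S : Set (ℝ × ℝ) := {p | 0 < p.1 ∧ p.1 < p.2} with hS
  set G : ℝ → ℝ → ℝ≥0∞ := fun x t =>
    S.indicator (fun p => ENNReal.ofReal (p.1 ^ k) * ENNReal.ofReal ‖f p.2‖) (x, t) with hG
  have hfm : Measurable fun t : ℝ => ENNReal.ofReal ‖f t‖ :=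
    (hf_cont.norm.measurable).ennreal_ofReal
  have hSm : MeasurableSet S :=
    ((isOpen_lt continuous_const continuous_fst).inter
      (isOpen_lt continuous_fst continuous_snd)).measurableSet
  have hmeas : AEMeasurable (Function.uncurry G) (volume.prod volume) := by
    have : Function.uncurry G
        = S.indicator (fun p => ENNReal.ofReal (p.1 ^ k) * ENNReal.ofReal ‖f p.2‖) := by
      funext p; simp [Function.uncurry, hG]
    rw [this]
    exact (Measurable.indicator
      (((measurable_fst.pow_const k).ennreal_ofReal).mul
        ((hf_cont.norm.measurable.comp measurable_snd).ennreal_ofReal)) hSm).aemeasurable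
  have step1 : ∫⁻ x in Ioi (0:ℝ), ENNReal.ofReal (x ^ k) * ∫⁻ t in Ioi x, ENNReal.ofReal ‖f t‖
      = ∫⁻ x, ∫⁻ t, G x t := by
    rw [← lintegral_indicator measurableSet_Ioi]
    apply lintegral_congr
    intro x
    by_cases hx : 0 < x
    · rw [Set.indicator_of_mem (s := Ioi (0:ℝ)) hx]
      have hGx : G x = (Ioi x).indicator (fun t => ENNReal.ofReal (x ^ k) * ENNReal.ofReal ‖f t‖) := by
        funext t
        by_cases h : x < t <;> simp [hG, hS, indicator, hx, h]
      rw [hGx, lintegral_indicator measurableSet_Ioi, lintegral_const_mul _ hfm]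
    · rw [Set.indicator_of_notMem (s := Ioi (0:ℝ)) hx]
      have hGx : ∀ t, G x t = 0 := by
        intro t; simp [hG, hS, indicator, hx]
      simp [hGx]
  have step2 : ∫⁻ x, ∫⁻ t, G x t = ∫⁻ t, ∫⁻ x, G x t := lintegral_lintegral_swap hmeas
  have step3 : ∀ t : ℝ, ∫⁻ x, G x t
      = (∫⁻ x in Ioo (0:ℝ) t, ENNReal.ofReal (x ^ k)) * ENNReal.ofReal ‖f t‖ := by
    intro t
    have hGt : (fun x => G x t)
        = (Ioo (0:ℝ) t).indicator (fun x => ENNReal.ofReal (x ^ k) * ENNReal.ofReal ‖f t‖) := by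
      funext x
      by_cases h : 0 < x ∧ x < t
      · simp [hG, hS, indicator, h, mem_Ioo]
      · simp [hG, hS, indicator, h, mem_Ioo]
    rw [hGt, lintegral_indicator measurableSet_Ioo]
    exact lintegral_mul_const _ ((measurable_id'.pow_const k).ennreal_ofReal)
  have hpow : ∀ t : ℝ, 0 < t →
      ∫⁻ x in Ioo (0:ℝ) t, ENNReal.ofReal (x ^ k) = ENNReal.ofReal (t ^ (k+1) / (k+1)) := by
    intro t ht
    rw [← ofReal_integral_eq_lintegral_ofReal]
    · rw [← integral_Ioc_eq_integral_Ioo, ← intervalIntegral.integral_of_le ht.le,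
        integral_pow]
      norm_num
    · exact (intervalIntegral.intervalIntegrable_pow k).1.mono_set Ioo_subset_Ioc_self
    · exact (ae_restrict_iff' measurableSet_Ioo).2 (ae_of_all _ fun x hx => pow_nonneg hx.1.le k)
  calc ∫⁻ x in Ioi (0:ℝ), ENNReal.ofReal (x ^ k) * ∫⁻ t in Ioi x, ENNReal.ofReal ‖f t‖
      = ∫⁻ t, ∫⁻ x, G x t := by rw [step1, step2]
    _ ≤ ∫⁻ t, ENNReal.ofReal (1 / ((k:ℝ)+1)) * ENNReal.ofReal (|t| ^ (k+1) * ‖f t‖) := by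
        apply lintegral_mono
        intro t
        dsimp only
        rw [step3 t]
        by_cases ht : 0 < t
        · rw [hpow t ht, ← ENNReal.ofReal_mul (by positivity), ← ENNReal.ofReal_mul (by positivity)]
          exact ENNReal.ofReal_le_ofReal (le_of_eq (by rw [abs_of_pos ht]; ring))
        · rw [Ioo_eq_empty ht]
          simp
    _ = ENNReal.ofReal (1 / ((k:ℝ)+1)) * ∫⁻ t, ENNReal.ofReal (|t| ^ (k+1) * ‖f t‖) := by
        rw [lintegral_const_mul]
        exact ((continuous_abs.pow (k+1)).mul hf_cont.norm).measurable.ennreal_ofReal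

theorem stmt10_neghalf (f : ℝ → ℂ) (hf_cont : Continuous f) (k : ℕ) :
    ∫⁻ x in Iic (0:ℝ), ENNReal.ofReal (|x| ^ k) * ∫⁻ t in Iic x, ENNReal.ofReal ‖f t‖
      ≤ ENNReal.ofReal (1 / ((k:ℝ)+1)) * ∫⁻ t, ENNReal.ofReal (|t| ^ (k+1) * ‖f t‖) := by
  set S : Set (ℝ × ℝ) := {p | p.1 ≤ 0 ∧ p.2 ≤ p.1} with hS
  set G : ℝ → ℝ → ℝ≥0∞ := fun x t =>
    S.indicator (fun p => ENNReal.ofReal (|p.1| ^ k) * ENNReal.ofReal ‖f p.2‖) (x, t) with hG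
  have hfm : Measurable fun t : ℝ => ENNReal.ofReal ‖f t‖ :=
    (hf_cont.norm.measurable).ennreal_ofReal
  have hSm : MeasurableSet S :=
    ((isClosed_le continuous_fst continuous_const).inter
      (isClosed_le continuous_snd continuous_fst)).measurableSet
  have hmeas : AEMeasurable (Function.uncurry G) (volume.prod volume) := by
    have : Function.uncurry G
        = S.indicator (fun p => ENNReal.ofReal (|p.1| ^ k) * ENNReal.ofReal ‖f p.2‖) := by
      funext p; simp [Function.uncurry, hG]
    rw [this]
    exact (Measurable.indicator
      (((measurable_fst.abs.pow_const k).ennreal_ofReal).mul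
        ((hf_cont.norm.measurable.comp measurable_snd).ennreal_ofReal)) hSm).aemeasurable
  have step1 : ∫⁻ x in Iic (0:ℝ), ENNReal.ofReal (|x| ^ k) * ∫⁻ t in Iic x, ENNReal.ofReal ‖f t‖
      = ∫⁻ x, ∫⁻ t, G x t := by
    rw [← lintegral_indicator measurableSet_Iic]
    apply lintegral_congr
    intro x
    by_cases hx : x ≤ 0
    · rw [Set.indicator_of_mem (s := Iic (0:ℝ)) hx]
      have hGx : G x = (Iic x).indicator
          (fun t => ENNReal.ofReal (|x| ^ k) * ENNReal.ofReal ‖f t‖) := by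
        funext t
        by_cases h : t ≤ x <;> simp [hG, hS, indicator, hx, h]
      rw [hGx, lintegral_indicator measurableSet_Iic, lintegral_const_mul _ hfm]
    · rw [Set.indicator_of_notMem (s := Iic (0:ℝ)) hx]
      have hGx : ∀ t, G x t = 0 := by
        intro t; simp [hG, hS, indicator, hx]
      simp [hGx]
  have step2 : ∫⁻ x, ∫⁻ t, G x t = ∫⁻ t, ∫⁻ x, G x t := lintegral_lintegral_swap hmeas
  have step3 : ∀ t : ℝ, ∫⁻ x, G x t
      = (∫⁻ x in Icc t (0:ℝ), ENNReal.ofReal (|x| ^ k)) * ENNReal.ofReal ‖f t‖ := by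
    intro t
    have hGt : (fun x => G x t)
        = (Icc t (0:ℝ)).indicator (fun x => ENNReal.ofReal (|x| ^ k) * ENNReal.ofReal ‖f t‖) := by
      funext x
      by_cases h : x ≤ 0 ∧ t ≤ x
      · simp [hG, hS, indicator, h, mem_Icc, and_comm]
      · simp [hG, hS, indicator, h, mem_Icc, and_comm]
    rw [hGt, lintegral_indicator measurableSet_Icc]
    exact lintegral_mul_const _ ((measurable_id'.abs.pow_const k).ennreal_ofReal)
  have hpow : ∀ t : ℝ, t ≤ 0 →
      ∫⁻ x in Icc t (0:ℝ), ENNReal.ofReal (|x| ^ k) = ENNReal.ofReal (|t| ^ (k+1) / (k+1)) := by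
    intro t ht
    rw [← ofReal_integral_eq_lintegral_ofReal]
    · have h1 : ∫ x in Icc t (0:ℝ), |x| ^ k = ∫ x in t..0, |x| ^ k := by
        rw [intervalIntegral.integral_of_le ht, integral_Icc_eq_integral_Ioc]
      have h2 : ∫ x in t..0, |x| ^ k = ∫ x in t..0, (-x) ^ k := by
        apply intervalIntegral.integral_congr
        intro x hx
        rw [uIcc_of_le ht] at hx
        simp only []
        rw [abs_of_nonpos hx.2]
      rw [h1, h2, intervalIntegral.integral_comp_neg (fun x => x ^ k), neg_zero,
        integral_pow, abs_of_nonpos ht]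
      norm_num
    · exact (continuous_abs.pow k).integrableOn_Icc
    · exact ae_of_all _ fun x => pow_nonneg (abs_nonneg x) k
  calc ∫⁻ x in Iic (0:ℝ), ENNReal.ofReal (|x| ^ k) * ∫⁻ t in Iic x, ENNReal.ofReal ‖f t‖
      = ∫⁻ t, ∫⁻ x, G x t := by rw [step1, step2]
    _ ≤ ∫⁻ t, ENNReal.ofReal (1 / ((k:ℝ)+1)) * ENNReal.ofReal (|t| ^ (k+1) * ‖f t‖) := by
        apply lintegral_mono
        intro t
        dsimp only
        rw [step3 t]
        by_cases ht : t ≤ 0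
        · rw [hpow t ht, ← ENNReal.ofReal_mul (by positivity), ← ENNReal.ofReal_mul (by positivity)]
          exact ENNReal.ofReal_le_ofReal (le_of_eq (by ring))
        · rw [Icc_eq_empty (by intro hle; exact ht (hle.trans le_rfl))]
          simp
    _ = ENNReal.ofReal (1 / ((k:ℝ)+1)) * ∫⁻ t, ENNReal.ofReal (|t| ^ (k+1) * ‖f t‖) := by
        rw [lintegral_const_mul]
        exact ((continuous_abs.pow (k+1)).mul hf_cont.norm).measurable.ennreal_ofReal

theorem stmt10_part1 (f : ℝ → ℂ) (hf_cont : Continuous f) (hf_int : Integrable f)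
    (h0 : ∫ t, f t = 0) (k : ℕ)
    (hW : Integrable (fun t : ℝ => |t| ^ (k+1) * ‖f t‖))
    (hposhalf : ∫⁻ x in Ioi (0:ℝ), ENNReal.ofReal (x ^ k) * ∫⁻ t in Ioi x, ENNReal.ofReal ‖f t‖
      ≤ ENNReal.ofReal (1 / ((k:ℝ)+1)) * ∫⁻ t, ENNReal.ofReal (|t| ^ (k+1) * ‖f t‖))
    (hneghalf : ∫⁻ x in Iic (0:ℝ), ENNReal.ofReal (|x| ^ k) * ∫⁻ t in Iic x, ENNReal.ofReal ‖f t‖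
      ≤ ENNReal.ofReal (1 / ((k:ℝ)+1)) * ∫⁻ t, ENNReal.ofReal (|t| ^ (k+1) * ‖f t‖)) :
    Integrable (fun x : ℝ => |x| ^ k * ‖∫ t in Set.Iic x, f t‖) ∧
      ∫⁻ x : ℝ, ENNReal.ofReal (|x| ^ k * ‖∫ t in Set.Iic x, f t‖) ≤
        ENNReal.ofReal (2 / ((k : ℝ) + 1)) *
          ∫⁻ t : ℝ, ENNReal.ofReal (|t| ^ (k + 1) * ‖f t‖) := by
  set I := ∫⁻ t : ℝ, ENNReal.ofReal (|t| ^ (k + 1) * ‖f t‖) with hI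
  have hWnn : (0 : ℝ → ℝ) ≤ᵐ[volume] fun t => |t| ^ (k+1) * ‖f t‖ :=
    ae_of_all _ fun t => by positivity
  have hIlt : I < ⊤ := (hasFiniteIntegral_iff_ofReal hWnn).1 hW.hasFiniteIntegral
  have hcont_h : Continuous (fun x => ∫ t in Iic x, f t) := by
    have : (fun x => ∫ t in Iic x, f t)
        = fun x => (∫ t in Iic 0, f t) + ∫ t in (0:ℝ)..x, f t := by
      funext x
      rw [← intervalIntegral.integral_Iic_sub_Iic hf_int.integrableOn hf_int.integrableOn]; ring
    rw [this]
    exact continuous_const.add (hf_int.continuous_primitive 0)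
  -- pointwise bounds
  have hbound_pos : ∀ x ∈ Ioi (0:ℝ),
      ENNReal.ofReal (|x| ^ k * ‖∫ t in Iic x, f t‖)
        ≤ ENNReal.ofReal (x ^ k) * ∫⁻ t in Ioi x, ENNReal.ofReal ‖f t‖ := by
    intro x hx
    have hx0 : (0:ℝ) < x := hx
    have htail : ‖∫ t in Iic x, f t‖ ≤ ∫ t in Ioi x, ‖f t‖ := by
      have h1 : (∫ t in Iic x, f t) + ∫ t in Ioi x, f t = 0 := by
        rw [← h0, ← Set.compl_Iic (a := x), integral_add_compl measurableSet_Iic hf_int]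
      have h2 : (∫ t in Iic x, f t) = - ∫ t in Ioi x, f t := by linear_combination h1
      rw [h2, norm_neg]
      exact norm_integral_le_integral_norm f
    have heq : ENNReal.ofReal (∫ t in Ioi x, ‖f t‖)
        = ∫⁻ t in Ioi x, ENNReal.ofReal ‖f t‖ :=
      ofReal_integral_eq_lintegral_ofReal (hf_int.norm.integrableOn)
        (ae_of_all _ fun t => norm_nonneg _)
    calc ENNReal.ofReal (|x| ^ k * ‖∫ t in Iic x, f t‖)
        ≤ ENNReal.ofReal (x ^ k * ∫ t in Ioi x, ‖f t‖) := by
          apply ENNReal.ofReal_le_ofReal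
          rw [abs_of_pos hx0]
          exact mul_le_mul_of_nonneg_left htail (by positivity)
      _ = ENNReal.ofReal (x ^ k) * ∫⁻ t in Ioi x, ENNReal.ofReal ‖f t‖ := by
          rw [ENNReal.ofReal_mul (by positivity), heq]
  have hbound_neg : ∀ x ∈ Iic (0:ℝ),
      ENNReal.ofReal (|x| ^ k * ‖∫ t in Iic x, f t‖)
        ≤ ENNReal.ofReal (|x| ^ k) * ∫⁻ t in Iic x, ENNReal.ofReal ‖f t‖ := by
    intro x _
    have htail : ‖∫ t in Iic x, f t‖ ≤ ∫ t in Iic x, ‖f t‖ := norm_integral_le_integral_norm f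
    have heq : ENNReal.ofReal (∫ t in Iic x, ‖f t‖)
        = ∫⁻ t in Iic x, ENNReal.ofReal ‖f t‖ :=
      ofReal_integral_eq_lintegral_ofReal (hf_int.norm.integrableOn)
        (ae_of_all _ fun t => norm_nonneg _)
    calc ENNReal.ofReal (|x| ^ k * ‖∫ t in Iic x, f t‖)
        ≤ ENNReal.ofReal (|x| ^ k * ∫ t in Iic x, ‖f t‖) :=
          ENNReal.ofReal_le_ofReal (mul_le_mul_of_nonneg_left htail (by positivity))
      _ = ENNReal.ofReal (|x| ^ k) * ∫⁻ t in Iic x, ENNReal.ofReal ‖f t‖ := by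
          rw [ENNReal.ofReal_mul (by positivity), heq]
  -- measurability of the bounds
  have hanti : Antitone (fun x : ℝ => ∫⁻ t in Ioi x, ENNReal.ofReal ‖f t‖) := by
    intro a b hab
    exact lintegral_mono' (Measure.restrict_mono (Ioi_subset_Ioi hab) le_rfl) le_rfl
  have hmono : Monotone (fun x : ℝ => ∫⁻ t in Iic x, ENNReal.ofReal ‖f t‖) := by
    intro a b hab
    exact lintegral_mono' (Measure.restrict_mono (Iic_subset_Iic.2 hab) le_rfl) le_rfl
  -- main inequality
  have key : ∫⁻ x : ℝ, ENNReal.ofReal (|x| ^ k * ‖∫ t in Iic x, f t‖)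
      ≤ ENNReal.ofReal (2 / ((k : ℝ) + 1)) * I := by
    rw [← lintegral_add_compl (fun x => ENNReal.ofReal (|x| ^ k * ‖∫ t in Iic x, f t‖))
      measurableSet_Iic (A := Iic (0:ℝ)), Set.compl_Iic]
    have hA : ∫⁻ x in Iic (0:ℝ), ENNReal.ofReal (|x| ^ k * ‖∫ t in Iic x, f t‖)
        ≤ ENNReal.ofReal (1 / ((k:ℝ)+1)) * I := by
      refine le_trans (setLIntegral_mono ?_ hbound_neg) hneghalf
      exact ((measurable_id'.abs.pow_const k).ennreal_ofReal).mul hmono.measurable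
    have hB : ∫⁻ x in Ioi (0:ℝ), ENNReal.ofReal (|x| ^ k * ‖∫ t in Iic x, f t‖)
        ≤ ENNReal.ofReal (1 / ((k:ℝ)+1)) * I := by
      refine le_trans (setLIntegral_mono ?_ hbound_pos) hposhalf
      exact ((measurable_id'.pow_const k).ennreal_ofReal).mul hanti.measurable
    calc _ ≤ ENNReal.ofReal (1 / ((k:ℝ)+1)) * I + ENNReal.ofReal (1 / ((k:ℝ)+1)) * I :=
          add_le_add hA hB
      _ = ENNReal.ofReal (2 / ((k : ℝ) + 1)) * I := by
          rw [← add_mul, ← ENNReal.ofReal_add (by positivity) (by positivity)]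
          congr 2
          ring
  refine ⟨?_, key⟩
  have hgc : Continuous (fun x : ℝ => |x| ^ k * ‖∫ t in Iic x, f t‖) :=
    (continuous_abs.pow k).mul hcont_h.norm
  refine ⟨hgc.aestronglyMeasurable, ?_⟩
  rw [hasFiniteIntegral_iff_ofReal (ae_of_all _ fun x => by positivity)]
  exact lt_of_le_of_lt key (ENNReal.mul_lt_top ofReal_lt_top hIlt)

-- tail of integrable function tends to 0 at infinity
theorem stmt10_tail_Ioi (w : ℝ → ℝ) (hw : Integrable w) :
    Tendsto (fun x => ∫ t in Ioi x, w t) atTop (𝓝 0) := by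
  have h2 : Tendsto (fun x : ℝ => (∫ t in Ioi (0:ℝ), w t) - ∫ t in (0:ℝ)..x, w t) atTop
      (𝓝 ((∫ t in Ioi (0:ℝ), w t) - ∫ t in Ioi (0:ℝ), w t)) :=
    tendsto_const_nhds.sub
      (intervalIntegral_tendsto_integral_Ioi 0 hw.integrableOn tendsto_id)
  rw [sub_self] at h2
  apply h2.congr'
  filter_upwards [eventually_ge_atTop (0:ℝ)] with x hx
  rw [intervalIntegral.integral_of_le hx]
  have hsplit : ∫ t in Ioi (0:ℝ), w t = (∫ t in Ioc 0 x, w t) + ∫ t in Ioi x, w t := by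
    rw [← setIntegral_union (Ioc_disjoint_Ioi le_rfl) measurableSet_Ioi
      hw.integrableOn hw.integrableOn, Ioc_union_Ioi_eq_Ioi hx]
  rw [hsplit]; ring

theorem stmt10_tail_Iic (w : ℝ → ℝ) (hw : Integrable w) :
    Tendsto (fun x => ∫ t in Iic x, w t) atBot (𝓝 0) := by
  have h2 : Tendsto (fun x : ℝ => (∫ t in Iic (0:ℝ), w t) - ∫ t in x..(0:ℝ), w t) atBot
      (𝓝 ((∫ t in Iic (0:ℝ), w t) - ∫ t in Iic (0:ℝ), w t)) :=
    tendsto_const_nhds.sub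
      (intervalIntegral_tendsto_integral_Iic 0 hw.integrableOn tendsto_id)
  rw [sub_self] at h2
  apply h2.congr'
  filter_upwards [eventually_le_atBot (0:ℝ)] with x hx
  rw [intervalIntegral.integral_of_le hx]
  have hsplit : ∫ t in Iic (0:ℝ), w t = (∫ t in Iic x, w t) + ∫ t in Ioc x 0, w t := by
    rw [← setIntegral_union (Iic_disjoint_Ioc le_rfl) measurableSet_Ioc
      hw.integrableOn hw.integrableOn, Iic_union_Ioc_eq_Iic hx]
  rw [hsplit]; ring

theorem stmt10_part2 (f : ℝ → ℂ) (hf_cont : Continuous f) (hf_int : Integrable f)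
    (h0 : ∫ t, f t = 0) (k : ℕ)
    (hA : Integrable (fun x : ℝ => |x| ^ k * ‖∫ t in Iic x, f t‖))
    (hW : Integrable (fun t : ℝ => |t| ^ (k+1) * ‖f t‖))
    (hvan : ∫ x : ℝ, (x:ℂ) ^ (k+1) * f x = 0)
    (tail_Ioi : Tendsto (fun x => ∫ t in Ioi x, |t| ^ (k+1) * ‖f t‖) atTop (𝓝 0))
    (tail_Iic : Tendsto (fun x => ∫ t in Iic x, |t| ^ (k+1) * ‖f t‖) atBot (𝓝 0)) :
    ∫ x : ℝ, (x:ℂ) ^ k * ∫ t in Iic x, f t = 0 := by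
  set h : ℝ → ℂ := fun x => ∫ t in Iic x, f t with hh
  set u : ℝ → ℂ := fun x => ((x:ℂ))^(k+1)/((k:ℂ)+1) with hu_def
  have hprim : ∀ y : ℝ, h y = (∫ t in Iic 0, f t) + ∫ t in (0:ℝ)..y, f t := by
    intro y
    rw [hh, ← intervalIntegral.integral_Iic_sub_Iic hf_int.integrableOn hf_int.integrableOn]
    ring
  have hcont_h : Continuous h := by
    have : h = fun y => (∫ t in Iic 0, f t) + ∫ t in (0:ℝ)..y, f t := funext hprim
    rw [this]
    exact continuous_const.add (hf_int.continuous_primitive 0)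
  have hderiv : ∀ x, HasDerivAt h (f x) x := by
    intro x
    have : h = fun y => (∫ t in Iic 0, f t) + ∫ t in (0:ℝ)..y, f t := funext hprim
    rw [this]
    exact (intervalIntegral.integral_hasDerivAt_right (hf_int.intervalIntegrable)
      (hf_cont.stronglyMeasurableAtFilter _ _) hf_cont.continuousAt).const_add _
  have hu : ∀ x : ℝ, HasDerivAt u ((x:ℂ)^k) x := by
    intro x
    have h1 := (hasDerivAt_pow (k+1) (x:ℂ)).div_const ((k:ℂ)+1)
    have h2 : (↑(k+1) * (x:ℂ) ^ (k + 1 - 1)) / ((k:ℂ)+1) = (x:ℂ)^k := by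
      rw [Nat.add_sub_cancel]
      have hne : ((k:ℂ)+1) ≠ 0 := Nat.cast_add_one_ne_zero k
      push_cast
      field_simp
    rw [h2] at h1
    exact h1.comp_ofReal
  -- norm computations
  have hnorm_pow : ∀ x : ℝ, ‖(x:ℂ)^k‖ = |x|^k := fun x => by
    rw [norm_pow, Complex.norm_real, Real.norm_eq_abs]
  have hnorm_c : ‖((k:ℂ)+1)‖ = (k:ℝ)+1 := by
    have : ((k:ℂ)+1) = ((k+1 : ℕ) : ℂ) := by push_cast; ring
    rw [this, Complex.norm_natCast]; push_cast; ring
  have hnorm_u : ∀ x : ℝ, ‖u x‖ = |x|^(k+1) / ((k:ℝ)+1) := fun x => by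
    rw [hu_def]
    simp only []
    rw [norm_div, norm_pow, Complex.norm_real, Real.norm_eq_abs, hnorm_c]
  -- integrabilities
  have hIA : Integrable (fun x : ℝ => (x:ℂ)^k * h x) := by
    refine hA.mono' (((Complex.continuous_ofReal.pow k).mul hcont_h).aestronglyMeasurable) ?_
    refine ae_of_all _ fun x => le_of_eq ?_
    rw [norm_mul, hnorm_pow]
  have hIB : Integrable (fun x : ℝ => u x * f x) := by
    refine hW.mono' ((((Complex.continuous_ofReal.pow (k+1)).div_const _).mul
      hf_cont).aestronglyMeasurable) ?_
    refine ae_of_all _ fun x => ?_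
    rw [norm_mul, hnorm_u]
    refine mul_le_mul_of_nonneg_right (div_le_self (by positivity) ?_) (norm_nonneg _)
    have : (0:ℝ) ≤ (k:ℝ) := Nat.cast_nonneg k
    linarith
  -- integration by parts on intervals
  have parts : ∀ a b : ℝ,
      ∫ x in a..b, ((x:ℂ)^k * h x + u x * f x) = u b * h b - u a * h a := by
    intro a b
    exact intervalIntegral.integral_deriv_mul_eq_sub
      (fun x _ => hu x) (fun x _ => hderiv x)
      ((Complex.continuous_ofReal.pow k).intervalIntegrable a b)
      (hf_cont.intervalIntegrable a b)
  -- limit of LHS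
  have hlim1 : Tendsto (fun r : ℝ => ∫ x in (-r)..r, ((x:ℂ)^k * h x + u x * f x)) atTop
      (𝓝 (∫ x : ℝ, ((x:ℂ)^k * h x + u x * f x))) :=
    intervalIntegral_tendsto_integral (hIA.add hIB) tendsto_neg_atTop_atBot tendsto_id
  have hint_eq : ∫ x : ℝ, ((x:ℂ)^k * h x + u x * f x) = ∫ x : ℝ, (x:ℂ)^k * h x := by
    rw [integral_add hIA hIB]
    have hB0 : ∫ x : ℝ, u x * f x = 0 := by
      have : ∀ x : ℝ, u x * f x = ((k:ℂ)+1)⁻¹ * ((x:ℂ)^(k+1) * f x) := by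
        intro x; rw [hu_def]; simp only []; ring
      simp_rw [this]
      rw [integral_const_mul, hvan, mul_zero]
    rw [hB0, add_zero]
  -- tail bounds for h
  have htail_pos : ∀ x : ℝ, ‖h x‖ ≤ ∫ t in Ioi x, ‖f t‖ := by
    intro x
    have h1 : (∫ t in Iic x, f t) + ∫ t in Ioi x, f t = 0 := by
      rw [← h0, ← Set.compl_Iic (a := x), integral_add_compl measurableSet_Iic hf_int]
    have h2 : h x = - ∫ t in Ioi x, f t := by rw [hh]; linear_combination h1
    rw [h2, norm_neg]
    exact norm_integral_le_integral_norm f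
  have htail_neg : ∀ x : ℝ, ‖h x‖ ≤ ∫ t in Iic x, ‖f t‖ := fun x =>
    norm_integral_le_integral_norm f
  -- boundary terms tend to zero
  have hk1 : (1:ℝ) ≤ (k:ℝ)+1 := by
    have : (0:ℝ) ≤ (k:ℝ) := Nat.cast_nonneg k
    linarith
  have hb1 : ∀ x : ℝ, ‖u x * h x‖ ≤ |x|^(k+1) * ‖h x‖ := by
    intro x
    rw [norm_mul, hnorm_u]
    exact mul_le_mul_of_nonneg_right (div_le_self (by positivity) hk1) (norm_nonneg _)
  have Tpos : Tendsto (fun x : ℝ => u x * h x) atTop (𝓝 0) := by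
    rw [tendsto_zero_iff_norm_tendsto_zero]
    refine squeeze_zero' (Eventually.of_forall fun x => norm_nonneg _) ?_ tail_Ioi
    filter_upwards [eventually_ge_atTop (0:ℝ)] with x hx
    have hb2 : |x|^(k+1) * ‖h x‖ ≤ |x|^(k+1) * ∫ t in Ioi x, ‖f t‖ :=
      mul_le_mul_of_nonneg_left (htail_pos x) (by positivity)
    have hb3 : |x|^(k+1) * ∫ t in Ioi x, ‖f t‖ ≤ ∫ t in Ioi x, |t|^(k+1) * ‖f t‖ := by
      rw [← integral_const_mul]
      refine setIntegral_mono_on ((hf_int.norm.const_mul _).integrableOn)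
        hW.integrableOn measurableSet_Ioi ?_
      intro t ht
      refine mul_le_mul_of_nonneg_right ?_ (norm_nonneg _)
      refine pow_le_pow_left₀ (abs_nonneg x) ?_ _
      calc |x| = x := abs_of_nonneg hx
        _ ≤ t := le_of_lt ht
        _ ≤ |t| := le_abs_self t
    calc ‖u x * h x‖ ≤ |x|^(k+1) * ‖h x‖ := hb1 x
      _ ≤ |x|^(k+1) * ∫ t in Ioi x, ‖f t‖ := hb2
      _ ≤ ∫ t in Ioi x, |t|^(k+1) * ‖f t‖ := hb3
  have Tneg : Tendsto (fun x : ℝ => u x * h x) atBot (𝓝 0) := by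
    rw [tendsto_zero_iff_norm_tendsto_zero]
    refine squeeze_zero' (Eventually.of_forall fun x => norm_nonneg _) ?_ tail_Iic
    filter_upwards [eventually_le_atBot (0:ℝ)] with x hx
    have hb2 : |x|^(k+1) * ‖h x‖ ≤ |x|^(k+1) * ∫ t in Iic x, ‖f t‖ :=
      mul_le_mul_of_nonneg_left (htail_neg x) (by positivity)
    have hb3 : |x|^(k+1) * ∫ t in Iic x, ‖f t‖ ≤ ∫ t in Iic x, |t|^(k+1) * ‖f t‖ := by
      rw [← integral_const_mul]
      refine setIntegral_mono_on ((hf_int.norm.const_mul _).integrableOn)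
        hW.integrableOn measurableSet_Iic ?_
      intro t ht
      refine mul_le_mul_of_nonneg_right ?_ (norm_nonneg _)
      refine pow_le_pow_left₀ (abs_nonneg x) ?_ _
      calc |x| = -x := abs_of_nonpos hx
        _ ≤ -t := by linarith [ht.out]
        _ ≤ |t| := neg_le_abs t
    calc ‖u x * h x‖ ≤ |x|^(k+1) * ‖h x‖ := hb1 x
      _ ≤ |x|^(k+1) * ∫ t in Iic x, ‖f t‖ := hb2
      _ ≤ ∫ t in Iic x, |t|^(k+1) * ‖f t‖ := hb3
  have hbd : Tendsto (fun r : ℝ => u r * h r - u (-r) * h (-r)) atTop (𝓝 0) := by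
    have := Tpos.sub (Tneg.comp tendsto_neg_atTop_atBot)
    simpa using this
  have hlim2 : Tendsto (fun r : ℝ => ∫ x in (-r)..r, ((x:ℂ)^k * h x + u x * f x)) atTop
      (𝓝 0) := by
    simp_rw [parts]
    exact hbd
  have hfin := tendsto_nhds_unique hlim1 hlim2
  rw [hint_eq] at hfin
  exact hfin

end Stmt10Aux

/-- If a continuous `f ∈ L¹(ℝ)` has `L ≥ 1` vanishing moments with absolutely
convergent moments up to order `L`, then its antiderivative `h(x) = ∫_{-∞}^x f`
satisfies `∫ |x|ᵏ |h(x)| dx ≤ (2/(k+1)) ∫ |t|^{k+1} |f(t)| dt` for `k = 0,…,L-1`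
(in particular these moments of `h` are absolutely convergent), and `h` has
`L-1` vanishing moments. -/
theorem stmt10 (f : ℝ → ℂ) (L : ℕ) (hL : 1 ≤ L)
    (hf_cont : Continuous f) (hf_int : Integrable f)
    (habs : ∀ k : ℕ, k ≤ L → Integrable (fun t : ℝ => |t| ^ k * ‖f t‖))
    (hvanish : ∀ k : ℕ, k < L → ∫ t : ℝ, (t : ℂ) ^ k * f t = 0) :
    (∀ k : ℕ, k < L →
      Integrable (fun x : ℝ => |x| ^ k * ‖∫ t in Set.Iic x, f t‖) ∧
      ∫⁻ x : ℝ, ENNReal.ofReal (|x| ^ k * ‖∫ t in Set.Iic x, f t‖) ≤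
        ENNReal.ofReal (2 / ((k : ℝ) + 1)) *
          ∫⁻ t : ℝ, ENNReal.ofReal (|t| ^ (k + 1) * ‖f t‖))
    ∧ (∀ k : ℕ, k + 2 ≤ L →
      ∫ x : ℝ, (x : ℂ) ^ k * ∫ t in Set.Iic x, f t = 0) := by
  have h0 : ∫ t : ℝ, f t = 0 := by
    have := hvanish 0 hL
    simpa using this
  have part1 : ∀ k : ℕ, k < L →
      Integrable (fun x : ℝ => |x| ^ k * ‖∫ t in Set.Iic x, f t‖) ∧
      ∫⁻ x : ℝ, ENNReal.ofReal (|x| ^ k * ‖∫ t in Set.Iic x, f t‖) ≤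
        ENNReal.ofReal (2 / ((k : ℝ) + 1)) *
          ∫⁻ t : ℝ, ENNReal.ofReal (|t| ^ (k + 1) * ‖f t‖) := by
    intro k hk
    exact stmt10_part1 f hf_cont hf_int h0 k (habs (k+1) (by omega))
      (stmt10_poshalf f hf_cont k) (stmt10_neghalf f hf_cont k)
  refine ⟨part1, ?_⟩
  intro k hk
  exact stmt10_part2 f hf_cont hf_int h0 k (part1 k (by omega)).1
    (habs (k+1) (by omega)) (hvanish (k+1) (by omega))
    (stmt10_tail_Ioi _ (habs (k+1) (by omega)))
    (stmt10_tail_Iic _ (habs (k+1) (by omega)))
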